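/- arXiv:2408.11516 — 4 statements merged into one kernel-verified Lean document; each statement's English description precedes it below -/
import Mathlib

section
/- If Y is a random variable taking values in the interval [m, M], then Var(Y) ≤ (M − E[Y])(E[Y] − m). -/
open MeasureTheory ProbabilityTheory

/-- **Bhatia–Davis inequality.** If `Y` takes values in `[m, M]` almost surely,
then `Var(Y) ≤ (M - E[Y]) * (E[Y] - m)`. -/
theorem bhatia_davis
    {Ω : Type*} [MeasurableSpace Ω] (P : Measure Ω) [IsProbabilityMeasure P]
    (Y : Ω → ℝ) (hY : Measurable Y) (m M : ℝ)
    (hbound : ∀ᵐ ω ∂P, Y ω ∈ Set.Icc m M) :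
    variance Y P ≤ (M - ∫ ω, Y ω ∂P) * ((∫ ω, Y ω ∂P) - m) := by
  have hC : ∀ᵐ ω ∂P, ‖Y ω‖ ≤ max ‖m‖ ‖M‖ := by
    filter_upwards [hbound] with ω hω
    rw [Real.norm_eq_abs, abs_le]
    constructor
    · have := hω.1
      have : -‖m‖ ≤ m := neg_abs_le m
      have := le_max_left ‖m‖ ‖M‖
      nlinarith [hω.1, neg_abs_le m, le_max_left ‖m‖ ‖M‖]
    · calc Y ω ≤ M := hω.2
        _ ≤ ‖M‖ := le_abs_self M
        _ ≤ _ := le_max_right _ _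
  have hmem : MemLp Y 2 P :=
    MemLp.of_bound (hY.aestronglyMeasurable) _ hC
  have hint : Integrable Y P := hmem.integrable (by norm_num)
  have hint2 : Integrable (fun ω => Y ω ^ 2) P := by
    have := hmem.integrable_sq
    exact this
  have hvar := variance_eq_sub hmem
  set μ := ∫ ω, Y ω ∂P with hμ
  have hkey : 0 ≤ ∫ ω, (M - Y ω) * (Y ω - m) ∂P := by
    apply integral_nonneg_of_ae
    filter_upwards [hbound] with ω hω
    show (0:ℝ) ≤ (M - Y ω) * (Y ω - m)
    nlinarith [hω.1, hω.2]
  have hexp : ∫ ω, (M - Y ω) * (Y ω - m) ∂P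
      = (M + m) * μ - (∫ ω, Y ω ^ 2 ∂P) - M * m := by
    have h1 : ∀ ω, (M - Y ω) * (Y ω - m)
        = (M + m) * Y ω - Y ω ^ 2 - M * m := by intro ω; ring
    simp_rw [h1]
    rw [integral_sub (show Integrable (fun ω => (M + m) * Y ω - Y ω ^ 2) P from
        (hint.const_mul _).sub hint2) (integrable_const _),
      integral_sub (show Integrable (fun ω => (M + m) * Y ω) P from hint.const_mul _) hint2,
      integral_const_mul, integral_const]
    simp [hμ]
  simp only [Pi.pow_apply] at hvar
  rw [hvar]
  rw [hexp] at hkey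
  nlinarith [hkey]
end

section
/- Let (S_j) be a sequence of mutually independent nonnegative random variables and let C > 0. Then the series ∑_j S_j converges almost surely if and only if both ∑_j P(S_j > C) < ∞ and ∑_j E[S_j · 1_{S_j ≤ C}] < ∞. -/
open MeasureTheory ProbabilityTheory Filter Set

lemma three_series_exp_ineq {C t : ℝ} (hC : 0 < C) (ht0 : 0 ≤ t) (htC : t ≤ C) :
    (1 - Real.exp (-C)) / C * t ≤ 1 - Real.exp (-t) := by
  have hd : t / C ≤ 1 := (div_le_one hC).2 htC
  have h := convexOn_exp.2 (Set.mem_univ (-C)) (Set.mem_univ 0)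
    (by positivity : (0:ℝ) ≤ t / C) (by linarith : (0:ℝ) ≤ 1 - t / C) (by ring)
  simp only [smul_eq_mul, mul_zero, add_zero, Real.exp_zero, mul_one] at h
  have he : t / C * -C = -t := by field_simp
  rw [he] at h
  have hkey : (1 - Real.exp (-C)) / C * t = t / C - t / C * Real.exp (-C) := by
    field_simp
  rw [hkey]
  linarith

/-- For mutually independent nonnegative random variables `(S j)` and `C > 0`,
the series `∑ j, S j` converges almost surely iff `∑ j, P(S j > C) < ∞` and
`∑ j, E[S j · 1_{S j ≤ C}] < ∞`. -/
theorem summable_iff_two_series_nonneg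
    {Ω : Type*} [MeasurableSpace Ω] (P : Measure Ω) [IsProbabilityMeasure P]
    (S : ℕ → Ω → ℝ) (hmeas : ∀ j, Measurable (S j))
    (hindep : iIndepFun S P)
    (hnonneg : ∀ j, ∀ᵐ ω ∂P, 0 ≤ S j ω) (C : ℝ) (hC : 0 < C) :
    (∀ᵐ ω ∂P, Summable fun j => S j ω) ↔
      ((∑' j, P {ω | C < S j ω}) < ⊤ ∧
        Summable fun j => ∫ ω, (if S j ω ≤ C then S j ω else 0) ∂P) := by
  classical
  set T : ℕ → Ω → ℝ := fun j ω => if S j ω ≤ C then S j ω else 0 with hT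
  have hTmeas : ∀ j, Measurable (T j) := fun j =>
    Measurable.ite (measurableSet_le (hmeas j) measurable_const) (hmeas j) measurable_const
  have hTleC : ∀ j ω, T j ω ≤ C := by
    intro j ω; by_cases h : S j ω ≤ C <;> simp [hT, h, hC.le]
  have hTle : ∀ j ω, 0 ≤ S j ω → T j ω ≤ S j ω := by
    intro j ω h0; by_cases h : S j ω ≤ C <;> simp [hT, h, h0]
  have hT0 : ∀ j ω, 0 ≤ S j ω → 0 ≤ T j ω := by
    intro j ω h0; by_cases h : S j ω ≤ C <;> simp [hT, h, h0]
  have hae : ∀ᵐ ω ∂P, ∀ j, 0 ≤ S j ω := ae_all_iff.2 hnonneg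
  have hTint : ∀ j, Integrable (T j) P := by
    intro j
    refine (integrable_const C).mono' (hTmeas j).aestronglyMeasurable ?_
    filter_upwards [hnonneg j] with ω h0
    rw [Real.norm_eq_abs, abs_of_nonneg (hT0 j ω h0)]
    exact hTleC j ω
  have hTint_nonneg : ∀ j, 0 ≤ ∫ ω, T j ω ∂P := fun j =>
    integral_nonneg_of_ae ((hnonneg j).mono fun ω h => hT0 j ω h)
  constructor
  · intro hsum
    have hA : ∀ j, MeasurableSet {ω | C < S j ω} := fun j =>
      measurableSet_lt measurable_const (hmeas j)
    have hzero : P (limsup (fun j => {ω | C < S j ω}) atTop) = 0 := by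
      rw [measure_eq_zero_iff_ae_notMem]
      filter_upwards [hsum] with ω hω
      rw [mem_limsup_iff_frequently_mem]
      intro hfreq
      have ht : ∀ᶠ j in atTop, S j ω < C := hω.tendsto_atTop_zero.eventually (gt_mem_nhds hC)
      obtain ⟨j, hj1, hj2⟩ := (hfreq.and_eventually ht).exists
      exact absurd hj2 (not_lt.2 hj1.le)
    constructor
    · by_contra hfin
      have htop : (∑' j, P {ω | C < S j ω}) = ⊤ := top_le_iff.1 (not_lt.1 hfin)
      have hindepA : iIndepSet (fun j => {ω | C < S j ω}) P := by
        rw [iIndepSet_iff_iIndep]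
        have h' := (iIndepFun_iff_iIndep _ _ _).1 hindep
        rw [iIndep_iff] at h' ⊢
        intro s f hf
        refine h' s fun i hi => ?_
        have hle : MeasurableSpace.generateFrom {({ω | C < S i ω} : Set Ω)} ≤
            MeasurableSpace.comap (S i) inferInstance := by
          refine MeasurableSpace.generateFrom_le ?_
          rintro t ht
          rw [Set.mem_singleton_iff] at ht; subst ht
          exact ⟨Set.Ioi C, measurableSet_Ioi, rfl⟩
        exact hle _ (hf i hi)
      have hone := ProbabilityTheory.measure_limsup_eq_one hA hindepA htop
      rw [hzero] at hone
      exact zero_ne_one hone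
    · -- the hard direction : `∑ ∫ T j < ∞`
      show Summable fun j => ∫ ω, T j ω ∂P
      set c₀ : ℝ := (1 - Real.exp (-C)) / C with hc₀
      have hexpC : Real.exp (-C) < 1 := Real.exp_lt_one_iff.2 (by linarith)
      have hc₀pos : 0 < c₀ := div_pos (by linarith) hC
      set g : ℕ → Ω → ℝ := fun j ω => Real.exp (-(T j ω)) with hg
      have hgmeas : ∀ j, Measurable (g j) := fun j => Real.measurable_exp.comp (hTmeas j).neg
      have hgpos : ∀ j ω, 0 < g j ω := fun j ω => Real.exp_pos _
      have hgle1 : ∀ j, ∀ᵐ ω ∂P, g j ω ≤ 1 := by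
        intro j
        filter_upwards [hnonneg j] with ω h0
        exact Real.exp_le_one_iff.2 (by simpa using hT0 j ω h0)
      have hgint : ∀ j, Integrable (g j) P := by
        intro j
        refine (integrable_const 1).mono' (hgmeas j).aestronglyMeasurable ?_
        filter_upwards [hgle1 j] with ω h
        rw [Real.norm_eq_abs, abs_of_pos (hgpos j ω)]; exact h
      set a : ℕ → ℝ := fun j => ∫ ω, g j ω ∂P with ha
      have hindepg : iIndepFun g P := by
        have := hindep.comp (fun j (t : ℝ) => Real.exp (-(if t ≤ C then t else 0)))
          (fun j => Real.measurable_exp.comp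
            ((Measurable.ite (measurableSet_le measurable_id measurable_const)
              measurable_id measurable_const).neg))
        exact this
      have hFeq : ∀ n, (∏ j ∈ Finset.range n, g j) = fun ω => ∏ j ∈ Finset.range n, g j ω := by
        intro n; funext ω; simp
      have hFint : ∀ n, Integrable (fun ω => ∏ j ∈ Finset.range n, g j ω) P := by
        intro n
        refine (integrable_const 1).mono' ?_ ?_
        · exact (Finset.measurable_prod _ fun j _ => hgmeas j).aestronglyMeasurable
        · have hall : ∀ᵐ ω ∂P, ∀ j, g j ω ≤ 1 := ae_all_iff.2 hgle1
          filter_upwards [hall] with ω hω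
          rw [Real.norm_eq_abs, abs_of_pos (Finset.prod_pos fun j _ => hgpos j ω)]
          exact Finset.prod_le_one (fun j _ => (hgpos j ω).le) fun j _ => hω j
      have hprod : ∀ n, ∫ ω, ∏ j ∈ Finset.range n, g j ω ∂P = ∏ j ∈ Finset.range n, a j := by
        intro n
        induction n with
        | zero => simp
        | succ n ih =>
          have hindmul : IndepFun (∏ j ∈ Finset.range n, g j) (g n) P :=
            hindepg.indepFun_prod_range_succ hgmeas n
          rw [hFeq n] at hindmul
          have hmul := hindmul.integral_mul_eq_mul_integral (hFint n).aestronglyMeasurable (hgint n).aestronglyMeasurable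
          have heq : ((fun ω => ∏ j ∈ Finset.range n, g j ω) * g n)
              = fun ω => ∏ j ∈ Finset.range (n + 1), g j ω := by
            funext ω; simp [Finset.prod_range_succ]
          rw [heq] at hmul
          rw [hmul, ih, Finset.prod_range_succ]
      -- lower bound on products of `a`
      set A : ℕ → Set Ω := fun M => {ω | ∀ n, ∑ j ∈ Finset.range n, T j ω ≤ (M : ℝ)} with hA
      have hAmeas : ∀ M, MeasurableSet (A M) := by
        intro M
        have : A M = ⋂ n, {ω | ∑ j ∈ Finset.range n, T j ω ≤ (M : ℝ)} := by
          ext ω; simp [hA, Set.mem_iInter]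
        rw [this]
        exact MeasurableSet.iInter fun n =>
          measurableSet_le (Finset.measurable_sum _ fun j _ => hTmeas j) measurable_const
      have hAcover : ∀ᵐ ω ∂P, ∃ M : ℕ, ω ∈ A M := by
        filter_upwards [hsum, hae] with ω hS h0
        have hTsum : Summable fun j => T j ω :=
          Summable.of_nonneg_of_le (fun j => hT0 j ω (h0 j)) (fun j => hTle j ω (h0 j)) hS
        refine ⟨⌈∑' j, T j ω⌉₊, fun n => ?_⟩
        calc ∑ j ∈ Finset.range n, T j ω ≤ ∑' j, T j ω :=
              hTsum.sum_le_tsum _ (fun j _ => hT0 j ω (h0 j))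
          _ ≤ _ := Nat.le_ceil _
      obtain ⟨M, hM⟩ : ∃ M, P (A M) ≠ 0 := by
        by_contra h
        push_neg at h
        have hU : P (⋃ M, A M) = 0 := measure_iUnion_null h
        have hcompl : P ((⋃ M, A M)ᶜ) = 0 := by
          rw [measure_eq_zero_iff_ae_notMem]
          filter_upwards [hAcover] with ω hω
          simpa [Set.mem_iUnion] using hω
        have := measure_add_measure_compl (μ := P) (MeasurableSet.iUnion hAmeas)
        rw [hU, hcompl, measure_univ] at this
        simp at this
      set ε : ℝ := Real.exp (-(M : ℝ)) * (P (A M)).toReal with hε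
      have hPA : 0 < (P (A M)).toReal := ENNReal.toReal_pos hM (measure_ne_top P _)
      have hεpos : 0 < ε := mul_pos (Real.exp_pos _) hPA
      have hlow : ∀ n, ε ≤ ∏ j ∈ Finset.range n, a j := by
        intro n
        rw [← hprod n]
        have hind : ∫ ω, (A M).indicator (fun _ => Real.exp (-(M : ℝ))) ω ∂P = ε := by
          rw [integral_indicator_const _ (hAmeas M)]
          simp [hε, mul_comm, measureReal_def]
        rw [← hind]
        refine integral_mono ((integrable_const _).indicator (hAmeas M)) (hFint n) ?_
        intro ω
        by_cases hω : ω ∈ A M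
        · rw [Set.indicator_of_mem hω]
          have : Real.exp (-(M : ℝ)) ≤ Real.exp (-(∑ j ∈ Finset.range n, T j ω)) :=
            Real.exp_le_exp.2 (neg_le_neg (hω n))
          calc Real.exp (-(M : ℝ)) ≤ Real.exp (-(∑ j ∈ Finset.range n, T j ω)) := this
            _ = ∏ j ∈ Finset.range n, g j ω := by
                rw [← Finset.sum_neg_distrib, Real.exp_sum]
        · rw [Set.indicator_of_notMem hω]
          exact Finset.prod_nonneg fun j _ => (hgpos j ω).le
      have hapos : ∀ j, 0 < a j := by
        intro j
        have h1 : Real.exp (-C) ≤ a j := by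
          have : ∫ (_ω : Ω), Real.exp (-C) ∂P = Real.exp (-C) := by simp
          rw [ha, ← this]
          exact integral_mono (integrable_const _) (hgint j)
            fun ω => Real.exp_le_exp.2 (neg_le_neg (hTleC j ω))
        linarith [Real.exp_pos (-C)]
      have hale1 : ∀ j, a j ≤ 1 := by
        intro j
        have : a j ≤ ∫ (_ω : Ω), (1 : ℝ) ∂P :=
          integral_mono_ae (hgint j) (integrable_const 1) (hgle1 j)
        simpa using this
      have hsummable1a : Summable fun j => 1 - a j := by
        refine summable_of_sum_range_le (c := -Real.log ε)
          (fun j => by linarith [hale1 j]) fun n => ?_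
        have hlog : Real.log ε ≤ Real.log (∏ j ∈ Finset.range n, a j) :=
          Real.log_le_log hεpos (hlow n)
        have hprodlog : Real.log (∏ j ∈ Finset.range n, a j)
            = ∑ j ∈ Finset.range n, Real.log (a j) :=
          Real.log_prod fun j _ => (hapos j).ne'
        have hterm : ∀ j ∈ Finset.range n, 1 - a j ≤ -Real.log (a j) := by
          intro j _
          have := Real.log_le_sub_one_of_pos (hapos j)
          linarith
        calc ∑ j ∈ Finset.range n, (1 - a j)
            ≤ ∑ j ∈ Finset.range n, -Real.log (a j) := Finset.sum_le_sum hterm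
          _ = -Real.log (∏ j ∈ Finset.range n, a j) := by
              rw [hprodlog, Finset.sum_neg_distrib]
          _ ≤ -Real.log ε := neg_le_neg hlog
      refine Summable.of_nonneg_of_le hTint_nonneg (fun j => ?_)
        (hsummable1a.mul_left c₀⁻¹)
      have key : c₀ * ∫ ω, T j ω ∂P ≤ 1 - a j := by
        have h1 : ∫ ω, c₀ * T j ω ∂P = c₀ * ∫ ω, T j ω ∂P := integral_const_mul _ _
        have h2 : ∫ ω, (1 - g j ω) ∂P = 1 - a j := by
          rw [integral_sub (integrable_const 1) (hgint j)]
          simp [ha]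
        rw [← h1, ← h2]
        refine integral_mono_ae ((hTint j).const_mul c₀) ((integrable_const 1).sub (hgint j)) ?_
        filter_upwards [hnonneg j] with ω h0
        exact three_series_exp_ineq hC (hT0 j ω h0) (hTleC j ω)
      calc ∫ ω, T j ω ∂P = c₀⁻¹ * (c₀ * ∫ ω, T j ω ∂P) := by
            field_simp
        _ ≤ c₀⁻¹ * (1 - a j) := by
            exact mul_le_mul_of_nonneg_left key (inv_nonneg.2 hc₀pos.le)
  · rintro ⟨h1, h2⟩
    have h2' : Summable fun j => ∫ ω, T j ω ∂P := h2
    have hlint : ∀ j, ∫⁻ ω, ENNReal.ofReal (T j ω) ∂P = ENNReal.ofReal (∫ ω, T j ω ∂P) :=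
      fun j => (ofReal_integral_eq_lintegral_ofReal (hTint j)
        ((hnonneg j).mono fun ω h => hT0 j ω h)).symm
    have htsum : ∑' j, ∫⁻ ω, ENNReal.ofReal (T j ω) ∂P ≠ ⊤ := by
      simp_rw [hlint]
      rw [← ENNReal.ofReal_tsum_of_nonneg hTint_nonneg h2']
      exact ENNReal.ofReal_ne_top
    have hlt : ∫⁻ ω, ∑' j, ENNReal.ofReal (T j ω) ∂P ≠ ⊤ := by
      rw [lintegral_tsum fun j => ((hTmeas j).ennreal_ofReal).aemeasurable]
      exact htsum
    have hTsummable : ∀ᵐ ω ∂P, Summable fun j => T j ω := by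
      have hmeas' : Measurable fun ω => ∑' j, ENNReal.ofReal (T j ω) :=
        Measurable.ennreal_tsum fun j => (hTmeas j).ennreal_ofReal
      filter_upwards [ae_lt_top hmeas' hlt, hae] with ω hω h0
      have hs := ENNReal.summable_toReal hω.ne
      refine hs.congr fun j => ?_
      rw [ENNReal.toReal_ofReal (hT0 j ω (h0 j))]
    have hBC : ∀ᵐ ω ∂P, ω ∉ limsup (fun j => {ω | C < S j ω}) atTop := by
      rw [← measure_eq_zero_iff_ae_notMem]
      exact measure_limsup_atTop_eq_zero h1.ne
    filter_upwards [hTsummable, hBC, hae] with ω hS hω h0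
    rw [mem_limsup_iff_frequently_mem, not_frequently] at hω
    obtain ⟨N, hN⟩ := eventually_atTop.1 hω
    have hshift : Summable fun j => S (j + N) ω := by
      refine ((summable_nat_add_iff N).2 hS).congr fun j => ?_
      have hle' := hN (j + N) (Nat.le_add_left N j)
      simp only [Set.mem_setOf_eq, not_lt] at hle'
      simp [hT, hle']
    exact (summable_nat_add_iff N).1 hshift
end

section
/- Let (S_j) be a sequence of mutually independent symmetric random variables such that each P(S_j = 0) = 0 and ∑_j S_j converges almost surely. Then P(∑_{j=1}^∞ S_j = 0) = 0. -/
open MeasureTheory ProbabilityTheory Filter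

/-- The σ-algebra generated by all the `S j` for `j ≠ n`. -/
def tailAlg {Ω : Type*} (S : ℕ → Ω → ℝ) (n : ℕ) : MeasurableSpace Ω :=
  ⨆ j ∈ ({n}ᶜ : Set ℕ), MeasurableSpace.comap (S j) inferInstance

/-- Key step: flipping the sign of `S n` preserves the probability of `{∑' j, S j = 0}`. -/
lemma sum_no_atom_key {Ω : Type*} [m0 : MeasurableSpace Ω] (P : Measure Ω)
    [IsProbabilityMeasure P]
    (S : ℕ → Ω → ℝ) (hmeas : ∀ j, Measurable (S j))
    (hindep : iIndepFun S P)
    (hsymm : ∀ j, IdentDistrib (S j) (fun ω => -(S j ω)) P P)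
    (hconv : ∀ᵐ ω ∂P, Summable fun j => S j ω) (n : ℕ) :
    ∃ E : Set Ω, MeasurableSet E ∧
      P {ω | (∑' j, S j ω) = 0} = P E ∧
      ∀ ω, Summable (fun j => S j ω) →
        (ω ∈ E ↔ (∑' j, S j ω) - 2 * S n ω = 0) := by
  classical
  have hm'le : tailAlg S n ≤ m0 :=
    iSup_le fun j => iSup_le fun _ => (hmeas j).comap_le
  have hSj : ∀ j, j ≠ n → Measurable[tailAlg S n] (S j) := by
    intro j hj
    exact (comap_measurable (S j)).mono
      (le_biSup (fun j => MeasurableSpace.comap (S j) inferInstance)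
        (by simpa using hj : j ∈ ({n}ᶜ : Set ℕ))) le_rfl
  -- the series with the `n`-th term removed
  set g : ℕ → Ω → ℝ := fun j ω => if j = n then 0 else S j ω with hg
  have hgmeas : ∀ j, Measurable[tailAlg S n] (g j) := by
    intro j
    by_cases hj : j = n
    · simp [hg, hj]
    · simpa [hg, hj] using hSj j hj
  set p : ℕ → Ω → ℝ := fun N ω => ∑ j ∈ Finset.range N, g j ω with hp
  have hpmeas : ∀ N, Measurable[tailAlg S n] (p N) :=
    fun N => Finset.measurable_sum _ fun j _ => hgmeas j
  set C : Set Ω := {ω | ∃ c, Tendsto (fun N => p N ω) atTop (nhds c)} with hC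
  have hCmeas : MeasurableSet[tailAlg S n] C := by
    letI : MeasurableSpace Ω := tailAlg S n
    exact measurableSet_exists_tendsto hpmeas
  set q : ℕ → Ω → ℝ := fun N => C.indicator (p N) with hq
  have hqmeas : ∀ N, Measurable[tailAlg S n] (q N) := fun N => (hpmeas N).indicator hCmeas
  set V : Ω → ℝ := fun ω => if h : ω ∈ C then h.choose else 0 with hV
  have hqtend : ∀ ω, Tendsto (fun N => q N ω) atTop (nhds (V ω)) := by
    intro ω
    by_cases h : ω ∈ C
    · have heq : (fun N => q N ω) = fun N => p N ω := by
        funext N; simp [hq, Set.indicator_of_mem h]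
      rw [heq, hV]
      simpa [h] using h.choose_spec
    · have heq : (fun N => q N ω) = fun _ => (0 : ℝ) := by
        funext N; simp [hq, Set.indicator_of_notMem h]
      rw [heq, hV]
      simp [h]
  have hVmeas : Measurable[tailAlg S n] V := by
    letI : MeasurableSpace Ω := tailAlg S n
    exact measurable_of_tendsto_metrizable hqmeas (tendsto_pi_nhds.mpr hqtend)
  -- identification of `V` at summable points
  have hVeq : ∀ ω, Summable (fun j => S j ω) → (∑' j, S j ω) = S n ω + V ω := by
    intro ω hω
    have hfin : Summable (fun j => if j = n then S j ω else 0) :=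
      summable_of_ne_finset_zero (s := {n}) (by intro b hb; simp at hb; simp [hb])
    have hgsum : Summable (fun j => g j ω) := by
      have heq : (fun j => g j ω) = fun j => S j ω - (if j = n then S j ω else 0) := by
        funext j; by_cases hj : j = n <;> simp [hg, hj]
      rw [heq]
      exact hω.sub hfin
    have htend : Tendsto (fun N => p N ω) atTop (nhds (∑' j, g j ω)) :=
      hgsum.hasSum.tendsto_sum_nat
    have hmem : ω ∈ C := ⟨_, htend⟩
    have hVval : V ω = ∑' j, g j ω := by
      rw [hV]; simp only [hmem, dif_pos]
      exact tendsto_nhds_unique hmem.choose_spec htend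
    rw [hVval]
    exact Summable.tsum_eq_add_tsum_ite hω n
  -- independence of `S n` (and `-S n`) from `V`
  have hIndep : Indep (⨆ j ∈ ({n} : Set ℕ), MeasurableSpace.comap (S j) inferInstance)
      (tailAlg S n) P :=
    indep_biSup_compl (fun j => (hmeas j).comap_le) hindep {n}
  have hSn_le : MeasurableSpace.comap (S n) inferInstance ≤
      ⨆ j ∈ ({n} : Set ℕ), MeasurableSpace.comap (S j) inferInstance :=
    le_biSup (fun j => MeasurableSpace.comap (S j) inferInstance) rfl
  have hIndepFun : IndepFun (S n) V P :=
    indep_of_indep_of_le_right (indep_of_indep_of_le_left hIndep hSn_le) hVmeas.comap_le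
  have hnegmeas : @Measurable Ω ℝ (MeasurableSpace.comap (S n) inferInstance) _
      (fun ω => -(S n ω)) := (comap_measurable (S n)).neg
  have hNegIndepFun : IndepFun (fun ω => -(S n ω)) V P :=
    indep_of_indep_of_le_right
      (indep_of_indep_of_le_left hIndep (hnegmeas.comap_le.trans hSn_le)) hVmeas.comap_le
  have hVamb : Measurable V := hVmeas.mono hm'le le_rfl
  have hmapeq : P.map (fun ω => (S n ω, V ω)) = P.map (fun ω => (-(S n ω), V ω)) := by
    rw [(indepFun_iff_map_prod_eq_prod_map_map (hmeas n).aemeasurable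
          hVamb.aemeasurable).mp hIndepFun,
        (indepFun_iff_map_prod_eq_prod_map_map (f := fun ω => -(S n ω)) ((hmeas n).neg).aemeasurable
          hVamb.aemeasurable).mp hNegIndepFun,
        (hsymm n).map_eq]
  have hset : MeasurableSet {x : ℝ × ℝ | x.1 + x.2 = 0} :=
    measurableSet_eq_fun (measurable_fst.add measurable_snd) measurable_const
  have hmeq : P {ω | S n ω + V ω = 0} = P {ω | -(S n ω) + V ω = 0} := by
    calc P {ω | S n ω + V ω = 0}
        = P.map (fun ω => (S n ω, V ω)) {x : ℝ × ℝ | x.1 + x.2 = 0} :=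
          (Measure.map_apply ((hmeas n).prodMk hVamb) hset).symm
      _ = P.map (fun ω => (-(S n ω), V ω)) {x : ℝ × ℝ | x.1 + x.2 = 0} := by rw [hmapeq]
      _ = P {ω | -(S n ω) + V ω = 0} :=
          Measure.map_apply (((hmeas n).neg).prodMk hVamb) hset
  have haeeq : P {ω | (∑' j, S j ω) = 0} = P {ω | S n ω + V ω = 0} := by
    refine measure_congr ?_
    rw [Filter.eventuallyEq_set]
    filter_upwards [hconv] with ω hω
    simp only [Set.mem_setOf_eq, hVeq ω hω]
  refine ⟨{ω | -(S n ω) + V ω = 0},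
    measurableSet_eq_fun ((hmeas n).neg.add hVamb) measurable_const,
    haeeq.trans hmeq, ?_⟩
  intro ω hω
  have h2 := hVeq ω hω
  simp only [Set.mem_setOf_eq]
  constructor <;> intro h <;> linarith

/-- If `(S j)` are mutually independent symmetric random variables with
`P(S j = 0) = 0` for every `j`, and `∑ j, S j` converges almost surely, then
`P(∑ j, S j = 0) = 0`. -/
theorem sum_no_atom_at_zero_of_no_atom_terms
    {Ω : Type*} [MeasurableSpace Ω] (P : Measure Ω) [IsProbabilityMeasure P]
    (S : ℕ → Ω → ℝ) (hmeas : ∀ j, Measurable (S j))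
    (hindep : iIndepFun S P)
    (hsymm : ∀ j, IdentDistrib (S j) (fun ω => -(S j ω)) P P)
    (hzero : ∀ j, P {ω | S j ω = 0} = 0)
    (hconv : ∀ᵐ ω ∂P, Summable fun j => S j ω) :
    P {ω | (∑' j, S j ω) = 0} = 0 := by
  classical
  choose E hEmeas hEeq hEmem using sum_no_atom_key P S hmeas hindep hsymm hconv
  -- a.e. all terms are nonzero
  have hne : ∀ᵐ ω ∂P, ∀ j, S j ω ≠ 0 := by
    rw [ae_all_iff]
    intro j
    have h := hzero j
    rw [ae_iff]
    simpa using h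
  -- the indicators of `E n` tend to zero a.e.
  have htend : ∀ᵐ ω ∂P,
      Tendsto (fun n => (E n).indicator (fun _ => (1 : ENNReal)) ω) atTop (nhds 0) := by
    filter_upwards [hconv, hne] with ω hω hωne
    have hS0 : Tendsto (fun n => S n ω) atTop (nhds 0) := hω.tendsto_atTop_zero
    have hoff : ∀ᶠ n in atTop, ω ∉ E n := by
      by_cases hT : (∑' j, S j ω) = 0
      · refine Eventually.of_forall fun n => ?_
        rw [hEmem n ω hω, hT]
        intro h
        exact hωne n (by linarith)
      · have h1 : ∀ᶠ n in atTop, |S n ω| < |∑' j, S j ω| / 2 := by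
          have habs : Tendsto (fun n => |S n ω|) atTop (nhds 0) := by
            simpa using hS0.abs
          exact habs.eventually_lt_const (by positivity)
        filter_upwards [h1] with n hn
        rw [hEmem n ω hω]
        intro h
        have h2 : (∑' j, S j ω) = 2 * S n ω := by linarith
        rw [h2, abs_mul] at hn
        simp only [abs_two] at hn
        have := abs_nonneg (S n ω)
        linarith
    refine Tendsto.congr' ?_ (tendsto_const_nhds :
      Tendsto (fun _ : ℕ => (0 : ENNReal)) atTop (nhds 0))
    filter_upwards [hoff] with n hn
    simp [Set.indicator_of_notMem hn]
  -- dominated convergence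
  have hlim : Tendsto (fun n => P (E n)) atTop (nhds 0) := by
    have heq : ∀ n, P (E n) = ∫⁻ ω, (E n).indicator (fun _ => (1 : ENNReal)) ω ∂P :=
      fun n => (lintegral_indicator_one (hEmeas n)).symm
    simp_rw [heq]
    have hdom := tendsto_lintegral_of_dominated_convergence
      (μ := P) (F := fun n => (E n).indicator (fun _ => (1 : ENNReal)))
      (f := fun _ => (0 : ENNReal)) (fun _ => (1 : ENNReal))
      (fun n => measurable_const.indicator (hEmeas n))
      (fun n => Eventually.of_forall fun ω => by
        by_cases h : ω ∈ E n <;> simp [h])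
      (by simp)
      htend
    simpa using hdom
  have hconst : (fun n => P (E n)) = fun _ => P {ω | (∑' j, S j ω) = 0} :=
    funext fun n => (hEeq n).symm
  rw [hconst] at hlim
  exact tendsto_nhds_unique tendsto_const_nhds hlim
end

section
/- Let (S_j) be a sequence of mutually independent symmetric random variables such that ∑_j S_j converges almost surely and ∑_j P(S_j ≠ 0) = ∞. Then P(∑_{j=1}^∞ S_j = 0) = 0. -/
open MeasureTheory ProbabilityTheory Filter

section Auxiliary

lemma measurable_tsum_real' {Ω : Type*} {m : MeasurableSpace Ω} (g : ℕ → Ω → ℝ)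
    (hg : ∀ j, Measurable (g j)) : Measurable fun ω => ∑' j, g j ω := by
  classical
  set C : Set Ω := {ω | Summable fun j => g j ω} with hC
  have hCm : MeasurableSet C := by
    have : C = {ω | (∑' j, (‖g j ω‖₊ : ENNReal)) ≠ ⊤} := by
      ext ω
      simp only [hC, Set.mem_setOf_eq, ENNReal.tsum_coe_ne_top_iff_summable]
      rw [← NNReal.summable_coe]
      simp only [coe_nnnorm, Real.norm_eq_abs]
      exact (summable_abs_iff).symm
    rw [this]
    exact ((Measurable.ennreal_tsum fun j => (hg j).nnnorm.coe_nnreal_ennreal) (measurableSet_singleton ⊤)).compl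
  have hptw : ∀ ω, Tendsto
      (fun n => C.indicator (fun ω => ∑ j ∈ Finset.range n, g j ω) ω) atTop
      (nhds (∑' j, g j ω)) := by
    intro ω
    by_cases hω : ω ∈ C
    · simp only [Set.indicator_of_mem hω]
      exact hω.hasSum.tendsto_sum_nat
    · simp only [Set.indicator_of_notMem hω]
      rw [tsum_eq_zero_of_not_summable hω]
      exact tendsto_const_nhds
  exact measurable_of_tendsto_metrizable
    (fun n => (Finset.measurable_sum _ fun j _ => hg j).indicator hCm)
    (tendsto_pi_nhds.2 hptw)

/-- Subset sums are injective when each element dominates the sum of later ones. -/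
lemma subset_sum_inj (s : ℕ → ℝ) (J : Finset ℕ)
    (hgap : ∀ k ∈ J, ∑ j ∈ J.filter (fun j => k < j), |s j| < |s k|)
    {G G' : Finset ℕ} (hG : G ⊆ J) (hG' : G' ⊆ J)
    (hsum : ∑ j ∈ G, s j = ∑ j ∈ G', s j) : G = G' := by
  classical
  by_contra hne
  have key : ∀ A B : Finset ℕ, A ∪ B ⊆ J → Disjoint A B →
      (∑ j ∈ A, s j = ∑ j ∈ B, s j) → ∀ (h : (A ∪ B).Nonempty),
      (A ∪ B).min' h ∈ A → False := by
    intro A B hABJ hdisj hABsum h hkA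
    set k := (A ∪ B).min' h with hk
    have hkJ : k ∈ J := hABJ (Finset.mem_union_left _ hkA)
    have hkB : k ∉ B := Finset.disjoint_left.1 hdisj hkA
    have herase : (A ∪ B).erase k ⊆ J.filter (fun j => k < j) := by
      intro j hj
      rw [Finset.mem_erase] at hj
      rw [Finset.mem_filter]
      exact ⟨hABJ hj.2, lt_of_le_of_ne (Finset.min'_le _ _ hj.2) (Ne.symm hj.1)⟩
    have h2 : s k + ∑ j ∈ A.erase k, s j = ∑ j ∈ A, s j := Finset.add_sum_erase _ _ hkA
    have hAB' : (A ∪ B).erase k = (A.erase k) ∪ B := by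
      rw [Finset.erase_union_distrib, Finset.erase_eq_of_notMem hkB]
    have hdisj' : Disjoint (A.erase k) B := hdisj.mono_left (Finset.erase_subset _ _)
    have habs : |s k| ≤ ∑ j ∈ (A ∪ B).erase k, |s j| := by
      have : s k = ∑ j ∈ B, s j - ∑ j ∈ A.erase k, s j := by linarith
      rw [this, hAB', Finset.sum_union hdisj']
      calc |∑ j ∈ B, s j - ∑ j ∈ A.erase k, s j|
          ≤ |∑ j ∈ B, s j| + |∑ j ∈ A.erase k, s j| := abs_sub _ _
        _ ≤ ∑ j ∈ B, |s j| + ∑ j ∈ A.erase k, |s j| :=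
            add_le_add (Finset.abs_sum_le_sum_abs _ _) (Finset.abs_sum_le_sum_abs _ _)
        _ = ∑ j ∈ A.erase k, |s j| + ∑ j ∈ B, |s j| := by ring
    have hle : ∑ j ∈ (A ∪ B).erase k, |s j| ≤ ∑ j ∈ J.filter (fun j => k < j), |s j| :=
      Finset.sum_le_sum_of_subset_of_nonneg herase (fun _ _ _ => abs_nonneg _)
    have := hgap k hkJ
    linarith
  have hABsum : ∑ j ∈ G \ G', s j = ∑ j ∈ G' \ G, s j := by
    have h1 : ∑ j ∈ G ∩ G', s j + ∑ j ∈ G \ G', s j = ∑ j ∈ G, s j :=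
      Finset.sum_inter_add_sum_sdiff _ _ _
    have h2 : ∑ j ∈ G' ∩ G, s j + ∑ j ∈ G' \ G, s j = ∑ j ∈ G', s j :=
      Finset.sum_inter_add_sum_sdiff _ _ _
    rw [Finset.inter_comm] at h2
    linarith
  have hne' : ((G \ G') ∪ (G' \ G)).Nonempty := by
    rw [Finset.nonempty_iff_ne_empty]
    intro hemp
    rw [Finset.union_eq_empty] at hemp
    exact hne (Finset.Subset.antisymm
      (fun a ha => by
        by_contra ha'
        exact (Finset.notMem_empty a) (hemp.1 ▸ Finset.mem_sdiff.2 ⟨ha, ha'⟩))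
      (fun a ha => by
        by_contra ha'
        exact (Finset.notMem_empty a) (hemp.2 ▸ Finset.mem_sdiff.2 ⟨ha, ha'⟩)))
  have hsubJ : (G \ G') ∪ (G' \ G) ⊆ J :=
    Finset.union_subset ((Finset.sdiff_subset).trans hG) ((Finset.sdiff_subset).trans hG')
  have hdisj : Disjoint (G \ G') (G' \ G) :=
    Finset.disjoint_left.2 fun a ha ha' =>
      (Finset.mem_sdiff.1 ha').2 (Finset.mem_sdiff.1 ha).1
  rcases Finset.mem_union.1 (((G \ G') ∪ (G' \ G)).min'_mem hne') with hkA | hkB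
  · exact key _ _ hsubJ hdisj hABsum hne' hkA
  · have hU : (G' \ G) ∪ (G \ G') = (G \ G') ∪ (G' \ G) := Finset.union_comm _ _
    refine key (G' \ G) (G \ G') (hU ▸ hsubJ) hdisj.symm hABsum.symm (hU ▸ hne') ?_
    simp only [hU]
    exact hkB


lemma count_le (s : ℕ → ℝ) (J : Finset ℕ)
    (hgap : ∀ k ∈ J, ∑ j ∈ J.filter (fun j => k < j), |s j| < |s k|)
    (n : ℕ) (hJn : J ⊆ Finset.range n) (c : ℝ) :
    ((Finset.range n).powerset.filter (fun F => ∑ j ∈ F, s j = c)).card ≤ 2 ^ (n - J.card) := by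
  classical
  have hcard : ((Finset.range n).powerset.filter (fun F => ∑ j ∈ F, s j = c)).card
      ≤ ((Finset.range n \ J).powerset).card := by
    apply Finset.card_le_card_of_injOn (fun F => F \ J)
    · intro F hF
      rw [Finset.mem_coe, Finset.mem_filter, Finset.mem_powerset] at hF
      rw [Finset.mem_coe, Finset.mem_powerset]
      exact Finset.sdiff_subset_sdiff hF.1 (le_refl J)
    · intro F₁ h₁ F₂ h₂ heq
      simp only [Finset.coe_filter, Set.mem_setOf_eq, Finset.mem_powerset] at h₁ h₂
      simp only at heq
      have e1 : ∑ j ∈ F₁ ∩ J, s j + ∑ j ∈ F₁ \ J, s j = c := by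
        rw [Finset.sum_inter_add_sum_sdiff]; exact h₁.2
      have e2 : ∑ j ∈ F₂ ∩ J, s j + ∑ j ∈ F₂ \ J, s j = c := by
        rw [Finset.sum_inter_add_sum_sdiff]; exact h₂.2
      rw [heq] at e1
      have e3 : ∑ j ∈ F₁ ∩ J, s j = ∑ j ∈ F₂ ∩ J, s j := by linarith
      have e4 : F₁ ∩ J = F₂ ∩ J :=
        subset_sum_inj s J hgap Finset.inter_subset_right Finset.inter_subset_right e3
      ext a
      by_cases haJ : a ∈ J
      · constructor
        · intro ha
          have : a ∈ F₂ ∩ J := e4 ▸ Finset.mem_inter.2 ⟨ha, haJ⟩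
          exact (Finset.mem_inter.1 this).1
        · intro ha
          have : a ∈ F₁ ∩ J := e4.symm ▸ Finset.mem_inter.2 ⟨ha, haJ⟩
          exact (Finset.mem_inter.1 this).1
      · constructor
        · intro ha
          have : a ∈ F₂ \ J := heq ▸ Finset.mem_sdiff.2 ⟨ha, haJ⟩
          exact (Finset.mem_sdiff.1 this).1
        · intro ha
          have : a ∈ F₁ \ J := heq.symm ▸ Finset.mem_sdiff.2 ⟨ha, haJ⟩
          exact (Finset.mem_sdiff.1 this).1
  rw [Finset.card_powerset, Finset.card_sdiff_of_subset hJn, Finset.card_range] at hcard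
  exact hcard

lemma exists_chain (s : ℕ → ℝ) (hs0 : Tendsto s atTop (nhds 0))
    (hK : {j | s j ≠ 0}.Infinite) (m : ℕ) :
    ∃ J : Finset ℕ, J.card = m ∧
      ∀ k ∈ J, ∑ j ∈ J.filter (fun j => k < j), |s j| < |s k| := by
  classical
  induction m with
  | zero => exact ⟨∅, rfl, by simp⟩
  | succ m ih =>
    obtain ⟨J, hcard, hgap⟩ := ih
    by_cases hJ : J.Nonempty
    case neg =>
      -- J = ∅, m = 0; just pick any nonzero element
      obtain ⟨j, hjs, _⟩ := hK.exists_gt 0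
      refine ⟨{j}, ?_, ?_⟩
      · rw [Finset.card_singleton, ← hcard, Finset.not_nonempty_iff_eq_empty.1 hJ,
          Finset.card_empty]
      · intro k hk
        rw [Finset.mem_singleton] at hk
        subst hk
        have : ({k} : Finset ℕ).filter (fun j => k < j) = ∅ := by
          rw [Finset.filter_singleton, if_neg (lt_irrefl k)]
        rw [this, Finset.sum_empty]
        exact abs_pos.2 hjs
    case pos =>
      set δ : ℝ := J.inf' hJ fun k => |s k| - ∑ j ∈ J.filter (fun j => k < j), |s j| with hδdef
      have hδpos : 0 < δ := by
        rw [hδdef, Finset.lt_inf'_iff]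
        intro k hk
        have := hgap k hk
        linarith
      have hδle : ∀ k ∈ J, δ ≤ |s k| - ∑ j ∈ J.filter (fun j => k < j), |s j| :=
        fun k hk => Finset.inf'_le _ hk
      obtain ⟨N, hN⟩ : ∃ N, ∀ j ≥ N, |s j| < δ := by
        obtain ⟨N, hN⟩ :=
          (hs0.eventually (Metric.ball_mem_nhds (0 : ℝ) hδpos)).exists_forall_of_atTop
        exact ⟨N, fun j hj => by simpa [Real.dist_eq] using hN j hj⟩
      obtain ⟨j, hjs, hjgt⟩ := hK.exists_gt (max N (J.sup id))
      have hjN : N ≤ j := le_of_lt (lt_of_le_of_lt (le_max_left _ _) hjgt)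
      have hjJ : ∀ l ∈ J, l < j := fun l hl =>
        lt_of_le_of_lt (le_trans (Finset.le_sup (f := id) hl) (le_max_right _ _)) hjgt
      have hjnotJ : j ∉ J := fun h => lt_irrefl j (hjJ j h)
      refine ⟨insert j J, ?_, ?_⟩
      · rw [Finset.card_insert_of_notMem hjnotJ, hcard]
      · intro k hk
        rcases Finset.mem_insert.1 hk with hkj | hkJ
        · subst hkj
          have hfil : (insert k J).filter (fun j => k < j) = ∅ := by
            rw [Finset.filter_insert, if_neg (lt_irrefl k)]
            rw [Finset.filter_eq_empty_iff]
            intro l hl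
            exact not_lt.2 (le_of_lt (hjJ l hl))
          rw [hfil, Finset.sum_empty]
          exact abs_pos.2 hjs
        · have hfil : (insert j J).filter (fun l => k < l)
              = insert j (J.filter (fun l => k < l)) := by
            rw [Finset.filter_insert, if_pos (hjJ k hkJ)]
          have hjnotfil : j ∉ J.filter (fun l => k < l) := fun h =>
            hjnotJ (Finset.mem_filter.1 h).1
          rw [hfil, Finset.sum_insert hjnotfil]
          have h1 : |s j| < δ := hN j hjN
          have h2 := hδle k hkJ
          linarith

lemma tendsto_count_zero (s : ℕ → ℝ) (hs : Summable s) (hK : {j | s j ≠ 0}.Infinite) (c : ℝ) :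
    Tendsto (fun n => ((2:ℝ)^n)⁻¹ *
      (((Finset.range n).powerset.filter (fun F => ∑ j ∈ F, s j = c)).card : ℝ))
      atTop (nhds 0) := by
  classical
  rw [Metric.tendsto_atTop]
  intro ε hε
  obtain ⟨m, hm⟩ : ∃ m : ℕ, ((1:ℝ)/2)^m < ε := exists_pow_lt_of_lt_one hε (by norm_num)
  obtain ⟨J, hJcard, hgap⟩ := exists_chain s hs.tendsto_atTop_zero hK m
  refine ⟨(J.sup id) + 1, fun n hn => ?_⟩
  have hJn : J ⊆ Finset.range n := fun a ha =>
    Finset.mem_range.2 (lt_of_lt_of_le (Nat.lt_succ_of_le (Finset.le_sup (f := id) ha)) hn)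
  have hmn : m ≤ n := by
    calc m = J.card := hJcard.symm
    _ ≤ (Finset.range n).card := Finset.card_le_card hJn
    _ = n := Finset.card_range n
  have hcount := count_le s J hgap n hJn c
  rw [hJcard] at hcount
  set u : ℝ := ((2:ℝ)^n)⁻¹ *
      (((Finset.range n).powerset.filter (fun F => ∑ j ∈ F, s j = c)).card : ℝ) with hu
  have hupos : 0 ≤ u := by positivity
  have hule : u ≤ ((1:ℝ)/2)^m := by
    have hcast : ((((Finset.range n).powerset.filter (fun F => ∑ j ∈ F, s j = c)).card : ℝ))
        ≤ (2:ℝ)^(n-m) := by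
      have := (Nat.cast_le (α := ℝ)).2 hcount
      push_cast at this
      exact this
    have h2 : ((2:ℝ)^n)⁻¹ * 2^(n-m) = ((1:ℝ)/2)^m := by
      have hnm : n - m + m = n := Nat.sub_add_cancel hmn
      rw [div_pow, one_pow, eq_div_iff (by positivity), ← hnm, pow_add]
      field_simp
      rw [Nat.add_sub_cancel]
    calc u ≤ ((2:ℝ)^n)⁻¹ * 2^(n-m) := by
          rw [hu]
          exact mul_le_mul_of_nonneg_left hcast (by positivity)
      _ = ((1:ℝ)/2)^m := h2
  rw [Real.dist_eq, sub_zero, abs_of_nonneg hupos]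
  exact lt_of_le_of_lt hule hm

end Auxiliary

section Prob


variable {Ω : Type*} [MeasurableSpace Ω] {P : Measure Ω} [IsProbabilityMeasure P]

lemma map_neg_add' {X Y : Ω → ℝ} (hX : Measurable X) (hY : Measurable Y)
    (hXY : IndepFun X Y P)
    (hsX : P.map X = P.map (fun ω => -X ω)) (hsY : P.map Y = P.map (fun ω => -Y ω)) :
    P.map (fun ω => X ω + Y ω) = P.map (fun ω => -(X ω + Y ω)) := by
  have hXY' : IndepFun (fun ω => -X ω) (fun ω => -Y ω) P :=
    hXY.comp measurable_neg measurable_neg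
  have h1 : P.map (fun ω => (X ω, Y ω)) = (P.map X).prod (P.map Y) :=
    (indepFun_iff_map_prod_eq_prod_map_map hX.aemeasurable hY.aemeasurable).1 hXY
  have h2 : P.map (fun ω => (-X ω, -Y ω))
      = (P.map fun ω => -X ω).prod (P.map fun ω => -Y ω) :=
    (indepFun_iff_map_prod_eq_prod_map_map hX.neg.aemeasurable hY.neg.aemeasurable).1 hXY'
  have key : P.map (fun ω => (X ω, Y ω)) = P.map (fun ω => (-X ω, -Y ω)) := by
    rw [h1, h2, hsX, hsY]
  have e1 : P.map (fun ω => X ω + Y ω)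
      = (P.map (fun ω => (X ω, Y ω))).map (fun p : ℝ × ℝ => p.1 + p.2) := by
    rw [Measure.map_map (by fun_prop) (hX.prodMk hY)]
    rfl
  have e2 : P.map (fun ω => -(X ω + Y ω))
      = (P.map (fun ω => (-X ω, -Y ω))).map (fun p : ℝ × ℝ => p.1 + p.2) := by
    rw [Measure.map_map (f := fun ω => (-X ω, -Y ω)) (by fun_prop) (hX.neg.prodMk hY.neg)]
    congr 1
    funext ω
    simp only [Function.comp_apply]
    ring
  rw [e1, e2, key]

lemma map_sum_symm (S : ℕ → Ω → ℝ) (hmeas : ∀ j, Measurable (S j))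
    (hindep : iIndepFun S P)
    (hsymm : ∀ j, IdentDistrib (S j) (fun ω => -(S j ω)) P P) (F : Finset ℕ) :
    P.map (fun ω => ∑ j ∈ F, S j ω) = P.map (fun ω => -(∑ j ∈ F, S j ω)) := by
  classical
  induction F using Finset.induction_on with
  | empty => simp
  | @insert a F ha ih =>
    have hsum' : ∀ ω, ∑ j ∈ insert a F, S j ω = S a ω + ∑ j ∈ F, S j ω :=
      fun ω => Finset.sum_insert ha
    have hXY : IndepFun (S a) (fun ω => ∑ j ∈ F, S j ω) P := by
      have := (hindep.indepFun_finsetSum_of_notMem hmeas ha)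
      have h2 := this.symm
      have : (∑ j ∈ F, S j) = fun ω => ∑ j ∈ F, S j ω := by
        funext ω; simp [Finset.sum_apply]
      rwa [this] at h2
    simp only [hsum']
    exact map_neg_add' (hmeas a) (Finset.measurable_sum F fun j _ => hmeas j) hXY
      ((hsymm a).map_eq) ih

lemma flip_eq (S : ℕ → Ω → ℝ) (hmeas : ∀ j, Measurable (S j))
    (hindep : iIndepFun S P)
    (hsymm : ∀ j, IdentDistrib (S j) (fun ω => -(S j ω)) P P)
    (hconv : ∀ᵐ ω ∂P, Summable fun j => S j ω) (F : Finset ℕ) :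
    P {ω | (∑' j, S j ω) = 2 * ∑ j ∈ F, S j ω} = P {ω | (∑' j, S j ω) = 0} := by
  classical
  set V : Ω → ℝ := fun ω => ∑ j ∈ F, S j ω with hV
  set W : Ω → ℝ := fun ω => ∑' j, if j ∈ F then 0 else S j ω with hW
  have hVmeas : Measurable V := Finset.measurable_sum F fun j _ => hmeas j
  have hWmeas : Measurable W := measurable_tsum_real' _ (fun j => by
    by_cases hj : j ∈ F
    · simpa [hj] using measurable_const
    · simpa [hj] using hmeas j)
  -- independence of V and W
  have hIndep : IndepFun V W P := by
    have hiI : iIndep (fun i => MeasurableSpace.comap (S i) inferInstance) P := hindep.iIndep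
    have hle : ∀ i, MeasurableSpace.comap (S i) inferInstance ≤ ‹MeasurableSpace Ω› :=
      fun i => (hmeas i).comap_le
    have hbig : Indep (⨆ i ∈ (↑F : Set ℕ), MeasurableSpace.comap (S i) inferInstance)
        (⨆ i ∈ ((↑F : Set ℕ))ᶜ, MeasurableSpace.comap (S i) inferInstance) P :=
      indep_iSup_of_disjoint hle hiI disjoint_compl_right
    have hVm : Measurable[⨆ i ∈ (↑F : Set ℕ), MeasurableSpace.comap (S i) inferInstance] V := by
      apply Finset.measurable_sum
      intro j hj
      exact (Measurable.of_comap_le le_rfl).mono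
        (le_iSup₂ (f := fun (i : ℕ) (_ : i ∈ (↑F : Set ℕ)) =>
          MeasurableSpace.comap (S i) inferInstance) j (Finset.mem_coe.2 hj)) le_rfl
    have hWm : Measurable[⨆ i ∈ ((↑F : Set ℕ))ᶜ, MeasurableSpace.comap (S i) inferInstance] W := by
      apply measurable_tsum_real'
      intro j
      by_cases hj : j ∈ F
      · simpa [hj] using measurable_const
      · have : Measurable[⨆ i ∈ ((↑F : Set ℕ))ᶜ,
            MeasurableSpace.comap (S i) inferInstance] (S j) :=
          (Measurable.of_comap_le le_rfl).mono
            (le_iSup₂ (f := fun (i : ℕ) (_ : i ∈ ((↑F : Set ℕ))ᶜ) =>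
              MeasurableSpace.comap (S i) inferInstance) j (by simpa using hj)) le_rfl
        simpa [hj] using this
    rw [IndepFun_iff_Indep]
    exact indep_of_indep_of_le_right (indep_of_indep_of_le_left hbig hVm.comap_le) hWm.comap_le
  -- a.e. decomposition T = V + W
  have hae : ∀ᵐ ω ∂P, (∑' j, S j ω) = V ω + W ω := by
    filter_upwards [hconv] with ω hs
    have hfsum : Summable (fun j => if j ∈ F then S j ω else 0) :=
      summable_of_ne_finset_zero (s := F) (fun j hj => if_neg hj)
    have hgsum : Summable (fun j => if j ∈ F then 0 else S j ω) := by
      have heq : (fun j => if j ∈ F then 0 else S j ω)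
          = (fun j => S j ω - if j ∈ F then S j ω else 0) :=
        funext fun j => by by_cases hj : j ∈ F <;> simp [hj]
      rw [heq]
      exact hs.sub hfsum
    have hsplit : ∀ j, S j ω
        = (if j ∈ F then S j ω else 0) + (if j ∈ F then 0 else S j ω) :=
      fun j => by by_cases hj : j ∈ F <;> simp [hj]
    calc (∑' j, S j ω)
        = ∑' j, ((if j ∈ F then S j ω else 0) + (if j ∈ F then 0 else S j ω)) := by
          exact tsum_congr hsplit
      _ = (∑' j, if j ∈ F then S j ω else 0) + ∑' j, (if j ∈ F then 0 else S j ω) :=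
          Summable.tsum_add hfsum hgsum
      _ = V ω + W ω := by
          congr 1
          rw [tsum_eq_sum (s := F) (fun j hj => if_neg hj)]
          exact Finset.sum_congr rfl fun j hj => if_pos hj
  -- symmetric joint law
  have hsymmV : P.map V = P.map (fun ω => -V ω) := map_sum_symm S hmeas hindep hsymm F
  have hIndep' : IndepFun (fun ω => -V ω) W P :=
    hIndep.comp measurable_neg measurable_id
  have hjoint : P.map (fun ω => (V ω, W ω)) = P.map (fun ω => (-V ω, W ω)) := by
    rw [(indepFun_iff_map_prod_eq_prod_map_map hVmeas.aemeasurable hWmeas.aemeasurable).1 hIndep,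
      (indepFun_iff_map_prod_eq_prod_map_map (f := fun ω => -V ω) hVmeas.neg.aemeasurable
        hWmeas.aemeasurable).1 hIndep', hsymmV]
  -- the two events, via the joint law
  have hA : MeasurableSet {p : ℝ × ℝ | p.1 + p.2 = 0} :=
    (measurable_fst.add measurable_snd) (measurableSet_singleton 0)
  have e1 : P {ω | -V ω + W ω = 0} = P {ω | V ω + W ω = 0} := by
    have m1 : P {ω | -V ω + W ω = 0}
        = P.map (fun ω => (-V ω, W ω)) {p : ℝ × ℝ | p.1 + p.2 = 0} := by
      rw [Measure.map_apply (f := fun ω => (-V ω, W ω)) (hVmeas.neg.prodMk hWmeas) hA]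
      rfl
    have m2 : P {ω | V ω + W ω = 0}
        = P.map (fun ω => (V ω, W ω)) {p : ℝ × ℝ | p.1 + p.2 = 0} := by
      rw [Measure.map_apply (hVmeas.prodMk hWmeas) hA]
      rfl
    rw [m1, m2, hjoint]
  have e2 : P {ω | (∑' j, S j ω) = 2 * ∑ j ∈ F, S j ω} = P {ω | -V ω + W ω = 0} := by
    apply measure_congr
    rw [Filter.eventuallyEq_set]
    filter_upwards [hae] with ω hω
    simp only [Set.mem_setOf_eq, hω, ← hV]
    constructor <;> intro h <;> linarith
  have e3 : P {ω | V ω + W ω = 0} = P {ω | (∑' j, S j ω) = 0} := by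
    apply measure_congr
    rw [Filter.eventuallyEq_set]
    filter_upwards [hae] with ω hω
    simp only [Set.mem_setOf_eq, hω]
  rw [e2, e1, e3]

end Prob


/-- If `(S j)` are mutually independent symmetric random variables such that
`∑ j, S j` converges almost surely and `∑ j, P(S j ≠ 0) = ∞`, then `P(∑ j, S j = 0) = 0`. -/
theorem sum_no_atom_at_zero
    {Ω : Type*} [MeasurableSpace Ω] (P : Measure Ω) [IsProbabilityMeasure P]
    (S : ℕ → Ω → ℝ) (hmeas : ∀ j, Measurable (S j))
    (hindep : iIndepFun S P)
    (hsymm : ∀ j, IdentDistrib (S j) (fun ω => -(S j ω)) P P)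
    (hconv : ∀ᵐ ω ∂P, Summable fun j => S j ω)
    (hdiv : (∑' j, P {ω | S j ω ≠ 0}) = ⊤) :
    P {ω | (∑' j, S j ω) = 0} = 0 := by
  classical
  have hTmeas : Measurable (fun ω => ∑' j, S j ω) := measurable_tsum_real' S hmeas
  -- Borel–Cantelli II : a.e. infinitely many nonzero terms
  have hsets : ∀ j, MeasurableSet {ω | S j ω ≠ 0} :=
    fun j => ((hmeas j) (measurableSet_singleton 0)).compl
  have hindepset : iIndepSet (fun j => {ω | S j ω ≠ 0}) P := by
    rw [iIndepSet_iff_meas_biInter hsets]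
    intro s
    exact hindep.meas_biInter (fun i _ => ⟨{0}ᶜ, (measurableSet_singleton 0).compl, rfl⟩)
  have hlimsup : P (limsup (fun j => {ω | S j ω ≠ 0}) atTop) = 1 :=
    measure_limsup_eq_one hsets hindepset hdiv
  have hKae : ∀ᵐ ω ∂P, {j | S j ω ≠ 0}.Infinite := by
    have hm : MeasurableSet (limsup (fun j => {ω | S j ω ≠ 0}) atTop) :=
      MeasurableSet.measurableSet_limsup hsets
    have h0 : P (limsup (fun j => {ω | S j ω ≠ 0}) atTop)ᶜ = 0 :=
      (prob_compl_eq_zero_iff hm).2 hlimsup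
    have hmem : ∀ᵐ ω ∂P, ω ∈ limsup (fun j => {ω | S j ω ≠ 0}) atTop := by
      rw [ae_iff]
      exact h0
    filter_upwards [hmem] with ω hω
    rw [mem_limsup_iff_frequently_mem] at hω
    apply Set.infinite_of_forall_exists_gt
    intro a
    obtain ⟨j, hj1, hj2⟩ := (frequently_atTop.1 hω) (a + 1)
    exact ⟨j, hj2, lt_of_lt_of_le (Nat.lt_succ_self a) hj1⟩
  -- the events
  set E : Finset ℕ → Set Ω := fun F => {ω | (∑' j, S j ω) = 2 * ∑ j ∈ F, S j ω} with hE
  have hEmeas : ∀ F, MeasurableSet (E F) := fun F =>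
    measurableSet_eq_fun hTmeas (measurable_const.mul (Finset.measurable_sum F fun j _ => hmeas j))
  have hEP : ∀ F, P (E F) = P {ω | (∑' j, S j ω) = 0} :=
    fun F => flip_eq S hmeas hindep hsymm hconv F
  -- the averaged counting functions
  set X : ℕ → Ω → ℝ := fun n ω => ((2:ℝ)^n)⁻¹ *
    ∑ F ∈ (Finset.range n).powerset, Set.indicator (E F) (fun _ => (1:ℝ)) ω with hX
  have hXcard : ∀ n ω, X n ω = ((2:ℝ)^n)⁻¹ *
      (((Finset.range n).powerset.filter
        (fun F => (∑' j, S j ω) = 2 * ∑ j ∈ F, S j ω)).card : ℝ) := by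
    intro n ω
    simp only [hX]
    congr 1
    rw [← Finset.sum_boole]
    apply Finset.sum_congr rfl
    intro F _
    rw [Set.indicator_apply]
    rfl
  have hXnonneg : ∀ n ω, 0 ≤ X n ω := by
    intro n ω
    rw [hXcard]
    positivity
  have hXle : ∀ n ω, X n ω ≤ 1 := by
    intro n ω
    rw [hXcard]
    have h1 : (((Finset.range n).powerset.filter
          (fun F => (∑' j, S j ω) = 2 * ∑ j ∈ F, S j ω)).card : ℝ) ≤ (2:ℝ)^n := by
      have := Finset.card_filter_le ((Finset.range n).powerset)
        (fun F => (∑' j, S j ω) = 2 * ∑ j ∈ F, S j ω)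
      rw [Finset.card_powerset, Finset.card_range] at this
      calc (((Finset.range n).powerset.filter
            (fun F => (∑' j, S j ω) = 2 * ∑ j ∈ F, S j ω)).card : ℝ)
          ≤ ((2^n : ℕ) : ℝ) := Nat.cast_le.2 this
        _ = (2:ℝ)^n := by push_cast; ring
    calc ((2:ℝ)^n)⁻¹ * _ ≤ ((2:ℝ)^n)⁻¹ * (2:ℝ)^n :=
          mul_le_mul_of_nonneg_left h1 (by positivity)
      _ = 1 := inv_mul_cancel₀ (by positivity)
  -- integral of X n
  have hXint : ∀ n, ∫ ω, X n ω ∂P = (P {ω | (∑' j, S j ω) = 0}).toReal := by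
    intro n
    rw [hX]
    simp only
    rw [integral_const_mul]
    rw [integral_finset_sum _ (fun F _ => (integrable_const (1:ℝ)).indicator (hEmeas F))]
    have : ∀ F ∈ (Finset.range n).powerset,
        ∫ ω, Set.indicator (E F) (fun _ => (1:ℝ)) ω ∂P
          = (P {ω | (∑' j, S j ω) = 0}).toReal := by
      intro F _
      rw [integral_indicator_const (1:ℝ) (hEmeas F), smul_eq_mul, mul_one, measureReal_def, hEP]
    rw [Finset.sum_congr rfl this, Finset.sum_const, Finset.card_powerset, Finset.card_range]
    rw [nsmul_eq_mul]
    push_cast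
    rw [← mul_assoc, inv_mul_cancel₀ (by positivity), one_mul]
  -- a.e. convergence to 0
  have hXlim : ∀ᵐ ω ∂P, Tendsto (fun n => X n ω) atTop (nhds 0) := by
    filter_upwards [hconv, hKae] with ω hsum hinf
    have heq : ∀ n, X n ω = ((2:ℝ)^n)⁻¹ *
        (((Finset.range n).powerset.filter
          (fun F => ∑ j ∈ F, S j ω = (∑' j, S j ω) / 2)).card : ℝ) := by
      intro n
      rw [hXcard]
      congr 3
      apply Finset.filter_congr
      intro F _
      constructor
      · intro h; linarith
      · intro h; linarith
    simp only [heq]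
    exact tendsto_count_zero (fun j => S j ω) hsum hinf _
  -- dominated convergence
  have hXmeas : ∀ n, AEStronglyMeasurable (X n) P := by
    intro n
    apply Measurable.aestronglyMeasurable
    apply Measurable.const_mul
    exact Finset.measurable_sum _ fun F _ => measurable_const.indicator (hEmeas F)
  have hbound : ∀ n, ∀ᵐ ω ∂P, ‖X n ω‖ ≤ (fun _ => (1:ℝ)) ω := by
    intro n
    filter_upwards with ω
    rw [Real.norm_eq_abs, abs_of_nonneg (hXnonneg n ω)]
    exact hXle n ω
  have hdct := tendsto_integral_of_dominated_convergence (μ := P)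
    (F := X) (f := fun _ => (0:ℝ)) (fun _ => (1:ℝ)) hXmeas (integrable_const 1) hbound hXlim
  rw [integral_zero] at hdct
  have hconst : ∀ n, ∫ ω, X n ω ∂P = (P {ω | (∑' j, S j ω) = 0}).toReal := hXint
  have : Tendsto (fun _ : ℕ => (P {ω | (∑' j, S j ω) = 0}).toReal) atTop (nhds 0) := by
    simpa only [hconst] using hdct
  have htoReal : (P {ω | (∑' j, S j ω) = 0}).toReal = 0 :=
    tendsto_nhds_unique tendsto_const_nhds this
  rcases ENNReal.toReal_eq_zero_iff _ |>.1 htoReal with h | h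
  · exact h
  · exact absurd h (measure_ne_top P _)
end
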